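/- In the setting of the previous LQG problem, if additionally Σ̃ = Σ and S̃ = S (i.e., the permuted observation has the same covariance and cross terms), then J₁* = J₂*, the optimizers coincide, and consequently J₃* ≤ J₁*: providing the decision makers with the convex combination ω = β y + (1−β) ỹ of observations yields a team cost no worse than the original. -/

import Mathlib

open MeasureTheory Matrix

set_option maxHeartbeats 1000000

/-- LQG team problem with convex-combination common randomness under the
symmetry assumptions `Ĩ Σ Ĩ = Σ` (same covariance for the permuted
observation) and `S Ĩ = S` (same cross term).  Then the two trace
optimization problems coincide, `J₁* = J₂*`, and the convex-combination
observation `ω = β y + (1-β) ỹ` yields a team cost no worse than the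
original: `J₃* ≤ J₁*`. -/
theorem lqg_convex_combination_symmetric
    {Ω : Type*} [MeasurableSpace Ω] (μ : Measure Ω) [IsProbabilityMeasure μ]
    (y : Ω → Fin 2 → ℝ)
    (B Sig S : Matrix (Fin 2) (Fin 2) ℝ) (hB : B.PosDef) (hBsym : B.IsSymm)
    (hmean : ∀ i, ∫ ω, y ω i ∂μ = 0)
    (hcov : ∀ i j, Sig i j = ∫ ω, y ω i * y ω j ∂μ)
    (Itilde : Matrix (Fin 2) (Fin 2) ℝ) (hI : Itilde = !![0, 1; 1, 0])
    (hSigsym : Itilde * Sig * Itilde = Sig) (hSsym : S * Itilde = S)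
    (β : ℝ) (hβ0 : 0 < β) (hβ1 : β < 1)
    (hint : ∀ C : Matrix (Fin 2) (Fin 2) ℝ, Integrable (fun ω =>
      (C *ᵥ (β • y ω + (1 - β) • (Itilde *ᵥ y ω))) ⬝ᵥ
          (B *ᵥ (C *ᵥ (β • y ω + (1 - β) • (Itilde *ᵥ y ω))))
        + 2 * ((C *ᵥ (β • y ω + (1 - β) • (Itilde *ᵥ y ω))) ⬝ᵥ (S *ᵥ y ω))) μ) :
    (sInf {r : ℝ | ∃ C : Matrix (Fin 2) (Fin 2) ℝ, C.IsDiag ∧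
          r = (Cᵀ * B * C * Sig).trace + 2 * (Cᵀ * S * Sig).trace}
        =
      sInf {r : ℝ | ∃ C : Matrix (Fin 2) (Fin 2) ℝ, C.IsDiag ∧
          r = (Cᵀ * B * C * (Itilde * Sig * Itilde)).trace
              + 2 * (Cᵀ * (S * Itilde) * (Itilde * Sig * Itilde)).trace})
    ∧
    (sInf {r : ℝ | ∃ C : Matrix (Fin 2) (Fin 2) ℝ, C.IsDiag ∧
        r = ∫ ω, (C *ᵥ (β • y ω + (1 - β) • (Itilde *ᵥ y ω))) ⬝ᵥ
              (B *ᵥ (C *ᵥ (β • y ω + (1 - β) • (Itilde *ᵥ y ω))))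
            + 2 * ((C *ᵥ (β • y ω + (1 - β) • (Itilde *ᵥ y ω))) ⬝ᵥ (S *ᵥ y ω)) ∂μ}
      ≤
    sInf {r : ℝ | ∃ C : Matrix (Fin 2) (Fin 2) ℝ, C.IsDiag ∧
          r = (Cᵀ * B * C * Sig).trace + 2 * (Cᵀ * S * Sig).trace}) := by
  constructor
  · rw [hSigsym, hSsym]
  -- entry facts
  have hb00 : 0 < B 0 0 := by
    have h := hB.dotProduct_mulVec_pos (x := ![1, 0]) (by intro h; have := congrFun h 0; simp at this)
    simpa [Matrix.mulVec, dotProduct, Fin.sum_univ_two] using h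
  have hb11 : 0 < B 1 1 := by
    have h := hB.dotProduct_mulVec_pos (x := ![0, 1]) (by intro h; have := congrFun h 1; simp at this)
    simpa [Matrix.mulVec, dotProduct, Fin.sum_univ_two] using h
  have hB10 : B 1 0 = B 0 1 := (hBsym.apply 1 0).symm
  have hS01 : S 0 1 = S 0 0 := by
    conv_rhs => rw [← hSsym]
    simp [hI, Matrix.mul_apply, Fin.sum_univ_two]
  have hS11 : S 1 1 = S 1 0 := by
    conv_rhs => rw [← hSsym]
    simp [hI, Matrix.mul_apply, Fin.sum_univ_two]
  have hSig11 : Sig 1 1 = Sig 0 0 := by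
    conv_rhs => rw [← hSigsym]
    simp [hI, Matrix.mul_apply, Fin.sum_univ_two, Matrix.vecMul, dotProduct]
  have hSig10 : Sig 1 0 = Sig 0 1 := by
    conv_rhs => rw [← hSigsym]
    simp [hI, Matrix.mul_apply, Fin.sum_univ_two, Matrix.vecMul, dotProduct]
  -- trace formula for diagonal C
  have traceEq : ∀ C : Matrix (Fin 2) (Fin 2) ℝ, C.IsDiag →
      (Cᵀ * B * C * Sig).trace + 2 * (Cᵀ * S * Sig).trace
        = C 0 0^2*B 0 0*Sig 0 0 + C 0 0*C 1 1*(B 0 1 + B 1 0)*Sig 0 1 + C 1 1^2*B 1 1*Sig 0 0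
          + 2*(C 0 0*(S 0 0*Sig 0 0 + S 0 0*Sig 0 1)
              + C 1 1*(S 1 0*Sig 0 1 + S 1 0*Sig 0 0)) := by
    intro C hC
    have hc01 : C 0 1 = 0 := hC (by decide)
    have hc10 : C 1 0 = 0 := hC (by decide)
    simp [Matrix.trace, Fin.sum_univ_two, Matrix.mul_apply, Matrix.diag, hc01, hc10,
      hSig11, hSig10, hS01, hS11]
    ring
  -- 0 belongs to the J₃ set
  have hJ30 : (0:ℝ) ∈ {r : ℝ | ∃ C : Matrix (Fin 2) (Fin 2) ℝ, C.IsDiag ∧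
      r = ∫ ω, (C *ᵥ (β • y ω + (1 - β) • (Itilde *ᵥ y ω))) ⬝ᵥ
            (B *ᵥ (C *ᵥ (β • y ω + (1 - β) • (Itilde *ᵥ y ω))))
          + 2 * ((C *ᵥ (β • y ω + (1 - β) • (Itilde *ᵥ y ω))) ⬝ᵥ (S *ᵥ y ω)) ∂μ} :=
    ⟨0, Matrix.isDiag_zero, by simp⟩
  have hsInf3le0 : sInf {r : ℝ | ∃ C : Matrix (Fin 2) (Fin 2) ℝ, C.IsDiag ∧
      r = ∫ ω, (C *ᵥ (β • y ω + (1 - β) • (Itilde *ᵥ y ω))) ⬝ᵥ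
            (B *ᵥ (C *ᵥ (β • y ω + (1 - β) • (Itilde *ᵥ y ω))))
          + 2 * ((C *ᵥ (β • y ω + (1 - β) • (Itilde *ᵥ y ω))) ⬝ᵥ (S *ᵥ y ω)) ∂μ} ≤ 0 := by
    by_cases hb : BddBelow {r : ℝ | ∃ C : Matrix (Fin 2) (Fin 2) ℝ, C.IsDiag ∧
        r = ∫ ω, (C *ᵥ (β • y ω + (1 - β) • (Itilde *ᵥ y ω))) ⬝ᵥ
              (B *ᵥ (C *ᵥ (β • y ω + (1 - β) • (Itilde *ᵥ y ω))))
            + 2 * ((C *ᵥ (β • y ω + (1 - β) • (Itilde *ᵥ y ω))) ⬝ᵥ (S *ᵥ y ω)) ∂μ}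
    · exact csInf_le hb hJ30
    · rw [Real.sInf_of_not_bddBelow hb]
  by_cases hA : Integrable (fun ω => y ω 0 * y ω 0) μ ∧ Integrable (fun ω => y ω 1 * y ω 1) μ
  · -- Case A : all second moments are genuine
    obtain ⟨hy00, hy11⟩ := hA
    -- integrability of products of components of w = β y + (1-β) ỹ
    have hw0 : Integrable (fun ω => (β * y ω 0 + (1-β) * y ω 1)^2) μ := by
      have h := ((hint !![1,0;0,0]).add (hint !![-1,0;0,0])).const_mul (1/(2 * B 0 0))
      have e : (fun ω => (β * y ω 0 + (1-β) * y ω 1)^2)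
          = (fun ω => 1/(2 * B 0 0) *
            ((((!![1,0;0,0] : Matrix (Fin 2) (Fin 2) ℝ) *ᵥ (β • y ω + (1 - β) • (Itilde *ᵥ y ω))) ⬝ᵥ
              (B *ᵥ ((!![1,0;0,0] : Matrix (Fin 2) (Fin 2) ℝ) *ᵥ (β • y ω + (1 - β) • (Itilde *ᵥ y ω))))
            + 2 * (((!![1,0;0,0] : Matrix (Fin 2) (Fin 2) ℝ) *ᵥ (β • y ω + (1 - β) • (Itilde *ᵥ y ω))) ⬝ᵥ (S *ᵥ y ω))) +
            (((!![-1,0;0,0] : Matrix (Fin 2) (Fin 2) ℝ) *ᵥ (β • y ω + (1 - β) • (Itilde *ᵥ y ω))) ⬝ᵥ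
              (B *ᵥ ((!![-1,0;0,0] : Matrix (Fin 2) (Fin 2) ℝ) *ᵥ (β • y ω + (1 - β) • (Itilde *ᵥ y ω))))
            + 2 * (((!![-1,0;0,0] : Matrix (Fin 2) (Fin 2) ℝ) *ᵥ (β • y ω + (1 - β) • (Itilde *ᵥ y ω))) ⬝ᵥ (S *ᵥ y ω))))) := by
        funext ω
        simp [hI, Matrix.mulVec, dotProduct, Fin.sum_univ_two]
        field_simp
        ring
      rw [e]; exact h
    have hw1 : Integrable (fun ω => (β * y ω 1 + (1-β) * y ω 0)^2) μ := by
      have h := ((hint !![0,0;0,1]).add (hint !![0,0;0,-1])).const_mul (1/(2 * B 1 1))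
      have e : (fun ω => (β * y ω 1 + (1-β) * y ω 0)^2)
          = (fun ω => 1/(2 * B 1 1) *
            ((((!![0,0;0,1] : Matrix (Fin 2) (Fin 2) ℝ) *ᵥ (β • y ω + (1 - β) • (Itilde *ᵥ y ω))) ⬝ᵥ
              (B *ᵥ ((!![0,0;0,1] : Matrix (Fin 2) (Fin 2) ℝ) *ᵥ (β • y ω + (1 - β) • (Itilde *ᵥ y ω))))
            + 2 * (((!![0,0;0,1] : Matrix (Fin 2) (Fin 2) ℝ) *ᵥ (β • y ω + (1 - β) • (Itilde *ᵥ y ω))) ⬝ᵥ (S *ᵥ y ω))) +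
            (((!![0,0;0,-1] : Matrix (Fin 2) (Fin 2) ℝ) *ᵥ (β • y ω + (1 - β) • (Itilde *ᵥ y ω))) ⬝ᵥ
              (B *ᵥ ((!![0,0;0,-1] : Matrix (Fin 2) (Fin 2) ℝ) *ᵥ (β • y ω + (1 - β) • (Itilde *ᵥ y ω))))
            + 2 * (((!![0,0;0,-1] : Matrix (Fin 2) (Fin 2) ℝ) *ᵥ (β • y ω + (1 - β) • (Itilde *ᵥ y ω))) ⬝ᵥ (S *ᵥ y ω))))) := by
        funext ω
        simp [hI, Matrix.mulVec, dotProduct, Fin.sum_univ_two]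
        field_simp
        ring
      rw [e]; exact h
    have hwsum : Integrable (fun ω => ((β * y ω 0 + (1-β) * y ω 1) + (β * y ω 1 + (1-β) * y ω 0))^2) μ := by
      have h := ((hint !![1,1;0,0]).add (hint !![-1,-1;0,0])).const_mul (1/(2 * B 0 0))
      have e : (fun ω => ((β * y ω 0 + (1-β) * y ω 1) + (β * y ω 1 + (1-β) * y ω 0))^2)
          = (fun ω => 1/(2 * B 0 0) *
            ((((!![1,1;0,0] : Matrix (Fin 2) (Fin 2) ℝ) *ᵥ (β • y ω + (1 - β) • (Itilde *ᵥ y ω))) ⬝ᵥ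
              (B *ᵥ ((!![1,1;0,0] : Matrix (Fin 2) (Fin 2) ℝ) *ᵥ (β • y ω + (1 - β) • (Itilde *ᵥ y ω))))
            + 2 * (((!![1,1;0,0] : Matrix (Fin 2) (Fin 2) ℝ) *ᵥ (β • y ω + (1 - β) • (Itilde *ᵥ y ω))) ⬝ᵥ (S *ᵥ y ω))) +
            (((!![-1,-1;0,0] : Matrix (Fin 2) (Fin 2) ℝ) *ᵥ (β • y ω + (1 - β) • (Itilde *ᵥ y ω))) ⬝ᵥ
              (B *ᵥ ((!![-1,-1;0,0] : Matrix (Fin 2) (Fin 2) ℝ) *ᵥ (β • y ω + (1 - β) • (Itilde *ᵥ y ω))))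
            + 2 * (((!![-1,-1;0,0] : Matrix (Fin 2) (Fin 2) ℝ) *ᵥ (β • y ω + (1 - β) • (Itilde *ᵥ y ω))) ⬝ᵥ (S *ᵥ y ω))))) := by
        funext ω
        simp [hI, Matrix.mulVec, dotProduct, Fin.sum_univ_two]
        field_simp
        ring
      rw [e]; exact h
    have hw01 : Integrable (fun ω => (β * y ω 0 + (1-β) * y ω 1) * (β * y ω 1 + (1-β) * y ω 0)) μ := by
      have h := ((hwsum.sub hw0).sub hw1).const_mul (1/2 : ℝ)
      have e : (fun ω => (β * y ω 0 + (1-β) * y ω 1) * (β * y ω 1 + (1-β) * y ω 0))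
          = (fun ω => (1/2 : ℝ) * (((β * y ω 0 + (1-β) * y ω 1) + (β * y ω 1 + (1-β) * y ω 0))^2
              - (β * y ω 0 + (1-β) * y ω 1)^2 - (β * y ω 1 + (1-β) * y ω 0)^2)) := by
        funext ω; ring
      rw [e]; exact h
    have hy01 : Integrable (fun ω => y ω 0 * y ω 1) μ := by
      have hden : (0:ℝ) < β^2 + (1-β)^2 := by positivity
      have h := ((hw01.sub ((hy00.add hy11).const_mul (β*(1-β)))).const_mul (1/(β^2+(1-β)^2)))
      have e : (fun ω => y ω 0 * y ω 1)
          = (fun ω => 1/(β^2+(1-β)^2) * ((β * y ω 0 + (1-β) * y ω 1) * (β * y ω 1 + (1-β) * y ω 0)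
              - β*(1-β) * (y ω 0 * y ω 0 + y ω 1 * y ω 1))) := by
        funext ω
        field_simp
        ring
      rw [e]; exact h
    -- integral of a combination of the three products
    have intK : ∀ K1 K2 K3 : ℝ,
        ∫ ω, (K1*(y ω 0*y ω 0) + (K2*(y ω 0*y ω 1) + K3*(y ω 1*y ω 1))) ∂μ
          = K1*Sig 0 0 + (K2*Sig 0 1 + K3*Sig 1 1) := by
      intro K1 K2 K3
      have hg : Integrable (fun ω => K2*(y ω 0*y ω 1) + K3*(y ω 1*y ω 1)) μ :=
        (hy01.const_mul K2).add (hy11.const_mul K3)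
      have h1 : Integrable (fun ω => K1*(y ω 0*y ω 0)) μ := hy00.const_mul K1
      have h2 : Integrable (fun ω => K2*(y ω 0*y ω 1)) μ := hy01.const_mul K2
      have h3 : Integrable (fun ω => K3*(y ω 1*y ω 1)) μ := hy11.const_mul K3
      rw [integral_add h1 hg, integral_add h2 h3,
        integral_const_mul, integral_const_mul, integral_const_mul,
        ← hcov 0 0, ← hcov 0 1, ← hcov 1 1]
    have hsr : 0 ≤ Sig 0 0 - Sig 0 1 := by
      have h0 : (0:ℝ) ≤ ∫ ω, ((1:ℝ)*(y ω 0*y ω 0) + ((-2:ℝ)*(y ω 0*y ω 1) + (1:ℝ)*(y ω 1*y ω 1))) ∂μ :=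
        integral_nonneg (fun ω => by
          simp only [Pi.zero_apply]
          nlinarith [sq_nonneg (y ω 0 - y ω 1)])
      rw [intK 1 (-2) 1, hSig11] at h0
      linarith
    have hDpos : 0 < B 0 0 * B 1 1 - B 0 1 * B 0 1 := by
      have h := hB.det_pos
      rw [Matrix.det_fin_two, hB10] at h
      exact h
    have hTpos : 0 < B 0 0 + B 1 1 := by linarith
    -- lower bound function
    have hz : Integrable (fun ω => -((B 0 0 + B 1 1)/(B 0 0*B 1 1 - B 0 1*B 0 1) *
        ((S 0 0*y ω 0 + S 0 1*y ω 1)^2 + (S 1 0*y ω 0 + S 1 1*y ω 1)^2))) μ := by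
      set c := (B 0 0 + B 1 1)/(B 0 0*B 1 1 - B 0 1*B 0 1) with hc
      have h := ((hy00.const_mul (-(c*(S 0 0^2 + S 1 0^2)))).add
        ((hy01.const_mul (-(c*(2*S 0 0*S 0 1 + 2*S 1 0*S 1 1)))).add
          (hy11.const_mul (-(c*(S 0 1^2 + S 1 1^2))))))
      have e : (fun ω => -(c * ((S 0 0*y ω 0 + S 0 1*y ω 1)^2 + (S 1 0*y ω 0 + S 1 1*y ω 1)^2)))
          = (fun ω => -(c*(S 0 0^2 + S 1 0^2))*(y ω 0*y ω 0)
              + (-(c*(2*S 0 0*S 0 1 + 2*S 1 0*S 1 1))*(y ω 0*y ω 1)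
                + -(c*(S 0 1^2 + S 1 1^2))*(y ω 1*y ω 1))) := by
        funext ω; ring
      rw [e]; exact h
    have hbdd : BddBelow {r : ℝ | ∃ C : Matrix (Fin 2) (Fin 2) ℝ, C.IsDiag ∧
        r = ∫ ω, (C *ᵥ (β • y ω + (1 - β) • (Itilde *ᵥ y ω))) ⬝ᵥ
              (B *ᵥ (C *ᵥ (β • y ω + (1 - β) • (Itilde *ᵥ y ω))))
            + 2 * ((C *ᵥ (β • y ω + (1 - β) • (Itilde *ᵥ y ω))) ⬝ᵥ (S *ᵥ y ω)) ∂μ} := by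
      refine ⟨∫ ω, -((B 0 0 + B 1 1)/(B 0 0*B 1 1 - B 0 1*B 0 1) *
        ((S 0 0*y ω 0 + S 0 1*y ω 1)^2 + (S 1 0*y ω 0 + S 1 1*y ω 1)^2)) ∂μ, ?_⟩
      rintro r ⟨C, hC, rfl⟩
      refine integral_mono hz (hint C) (fun ω => ?_)
      generalize (C *ᵥ (β • y ω + (1 - β) • (Itilde *ᵥ y ω))) = q
      have expand : q ⬝ᵥ (B *ᵥ q) + 2 * (q ⬝ᵥ (S *ᵥ y ω))
          = B 0 0*(q 0)^2 + 2*B 0 1*(q 0)*(q 1) + B 1 1*(q 1)^2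
            + 2*((q 0)*(S 0 0*y ω 0 + S 0 1*y ω 1) + (q 1)*(S 1 0*y ω 0 + S 1 1*y ω 1)) := by
        simp [Matrix.mulVec, dotProduct, Fin.sum_univ_two, hB10]
        ring
      rw [expand]
      set D := B 0 0*B 1 1 - B 0 1*B 0 1 with hD
      set T := B 0 0 + B 1 1 with hT
      set z0 := S 0 0*y ω 0 + S 0 1*y ω 1 with hz0
      set z1 := S 1 0*y ω 0 + S 1 1*y ω 1 with hz1
      set q0 := q 0
      set q1 := q 1
      have key : T * (D*(B 0 0*q0^2 + 2*B 0 1*q0*q1 + B 1 1*q1^2 + 2*(q0*z0+q1*z1)) + T*(z0^2+z1^2))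
          = (D*q0+T*z0)^2 + (D*q1+T*z1)^2
            + D*((B 0 0*q0+B 0 1*q1)^2+(B 0 1*q0+B 1 1*q1)^2) := by
        rw [hD, hT]; ring
      have key2 : 0 ≤ D*(B 0 0*q0^2 + 2*B 0 1*q0*q1 + B 1 1*q1^2 + 2*(q0*z0+q1*z1)) + T*(z0^2+z1^2) := by
        nlinarith [sq_nonneg (D*q0+T*z0), sq_nonneg (D*q1+T*z1),
          mul_nonneg hDpos.le (sq_nonneg (B 0 0*q0+B 0 1*q1)),
          mul_nonneg hDpos.le (sq_nonneg (B 0 1*q0+B 1 1*q1)), key, hTpos, hDpos]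
      have hdiveq : -(T/D * (z0^2+z1^2)) = (-(T*(z0^2+z1^2)))/D := by ring
      rw [hdiveq, div_le_iff₀ hDpos]
      linarith [key2]
    -- conclude case A
    refine le_csInf ⟨0, 0, Matrix.isDiag_zero, by simp⟩ ?_
    rintro b ⟨C, hC, rfl⟩
    refine le_trans (csInf_le hbdd ⟨C, hC, rfl⟩) ?_
    rw [traceEq C hC]
    have hc01 : C 0 1 = 0 := hC (by decide)
    have hc10 : C 1 0 = 0 := hC (by decide)
    have hfun : (fun ω => (C *ᵥ (β • y ω + (1 - β) • (Itilde *ᵥ y ω))) ⬝ᵥ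
          (B *ᵥ (C *ᵥ (β • y ω + (1 - β) • (Itilde *ᵥ y ω))))
        + 2 * ((C *ᵥ (β • y ω + (1 - β) • (Itilde *ᵥ y ω))) ⬝ᵥ (S *ᵥ y ω)))
        = (fun ω =>
          (C 0 0 ^ 2 * B 0 0 * β ^ 2 + C 0 0 * C 1 1 * (B 0 1 + B 1 0) * (β * (1 - β))
              + C 1 1 ^ 2 * B 1 1 * (1 - β) ^ 2
              + 2 * C 0 0 * S 0 0 * β + 2 * C 1 1 * S 1 0 * (1 - β)) * (y ω 0 * y ω 0)
          + ((2 * C 0 0 ^ 2 * B 0 0 * (β * (1 - β))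
              + C 0 0 * C 1 1 * (B 0 1 + B 1 0) * (β ^ 2 + (1 - β) ^ 2)
              + 2 * C 1 1 ^ 2 * B 1 1 * (β * (1 - β))
              + 2 * C 0 0 * S 0 0 * (1 - β) + 2 * C 0 0 * S 0 1 * β
              + 2 * C 1 1 * S 1 0 * β + 2 * C 1 1 * S 1 1 * (1 - β)) * (y ω 0 * y ω 1)
          + (C 0 0 ^ 2 * B 0 0 * (1 - β) ^ 2 + C 0 0 * C 1 1 * (B 0 1 + B 1 0) * (β * (1 - β))
              + C 1 1 ^ 2 * B 1 1 * β ^ 2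
              + 2 * C 0 0 * S 0 1 * (1 - β) + 2 * C 1 1 * S 1 1 * β) * (y ω 1 * y ω 1))) := by
      funext ω
      simp [hI, Matrix.mulVec, dotProduct, Fin.sum_univ_two, hc01, hc10]
      ring
    rw [hfun, intK, hSig11, hS01, hS11, hB10]
    have hquad : 0 ≤ C 0 0^2*B 0 0 - 2*C 0 0*C 1 1*B 0 1 + C 1 1^2*B 1 1 := by
      have h := hB.posSemidef.dotProduct_mulVec_nonneg ![C 0 0, -(C 1 1)]
      simp [Matrix.mulVec, dotProduct, Fin.sum_univ_two, hB10] at h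
      nlinarith [h]
    nlinarith [mul_nonneg (mul_nonneg (mul_pos hβ0 (by linarith : (0:ℝ) < 1-β)).le hsr) hquad]
  · -- Case B : some second moment is not integrable, so Sig 0 0 = Sig 1 1 = 0
    have hSig00 : Sig 0 0 = 0 := by
      rcases not_and_or.mp hA with h | h
      · rw [hcov 0 0]; exact integral_undef h
      · rw [← hSig11, hcov 1 1]; exact integral_undef h
    set a := (B 0 1 + B 1 0) * Sig 0 1 with ha
    set u := S 0 0 * Sig 0 1 with hu
    set v := S 1 0 * Sig 0 1 with hv
    have hval : ∀ C : Matrix (Fin 2) (Fin 2) ℝ, C.IsDiag →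
        (Cᵀ * B * C * Sig).trace + 2 * (Cᵀ * S * Sig).trace
          = a * (C 0 0 * C 1 1) + 2*u*C 0 0 + 2*v*C 1 1 := by
      intro C hC
      rw [traceEq C hC, hSig00, ha, hu, hv]
      ring
    by_cases hzero : a = 0 ∧ u = 0 ∧ v = 0
    · have hset : {r : ℝ | ∃ C : Matrix (Fin 2) (Fin 2) ℝ, C.IsDiag ∧
          r = (Cᵀ * B * C * Sig).trace + 2 * (Cᵀ * S * Sig).trace} = {0} := by
        ext r
        simp only [Set.mem_setOf_eq, Set.mem_singleton_iff]
        constructor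
        · rintro ⟨C, hC, rfl⟩
          rw [hval C hC, hzero.1, hzero.2.1, hzero.2.2]; ring
        · rintro rfl
          exact ⟨0, Matrix.isDiag_zero, by simp⟩
      rw [hset, csInf_singleton]
      exact hsInf3le0
    · have hnb : ¬ BddBelow {r : ℝ | ∃ C : Matrix (Fin 2) (Fin 2) ℝ, C.IsDiag ∧
          r = (Cᵀ * B * C * Sig).trace + 2 * (Cᵀ * S * Sig).trace} := by
        rintro ⟨x, hx⟩
        obtain ⟨c0, c1, hc⟩ : ∃ c0 c1 : ℝ, a*(c0*c1) + 2*u*c0 + 2*v*c1 = x - 1 := by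
          by_cases hu' : u ≠ 0
          · exact ⟨(x-1)/(2*u), 0, by field_simp; ring⟩
          · by_cases hv' : v ≠ 0
            · exact ⟨0, (x-1)/(2*v), by field_simp; ring⟩
            · push_neg at hu' hv'
              have ha' : a ≠ 0 := fun h => hzero ⟨h, hu', hv'⟩
              exact ⟨1, (x-1)/a, by rw [hu', hv']; field_simp; ring⟩
        have hdiag : (!![c0, 0; 0, c1] : Matrix (Fin 2) (Fin 2) ℝ).IsDiag := by
          intro i j hij
          fin_cases i <;> fin_cases j <;> simp_all
        have hmem : x - 1 ∈ {r : ℝ | ∃ C : Matrix (Fin 2) (Fin 2) ℝ, C.IsDiag ∧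
            r = (Cᵀ * B * C * Sig).trace + 2 * (Cᵀ * S * Sig).trace} := by
          refine ⟨!![c0, 0; 0, c1], hdiag, ?_⟩
          rw [hval _ hdiag]
          have e00 : (!![c0, 0; 0, c1] : Matrix (Fin 2) (Fin 2) ℝ) 0 0 = c0 := rfl
          have e11 : (!![c0, 0; 0, c1] : Matrix (Fin 2) (Fin 2) ℝ) 1 1 = c1 := rfl
          rw [e00, e11]
          linarith [hc]
        have := hx hmem
        linarith
      rw [Real.sInf_of_not_bddBelow hnb]
      exact hsInf3le0
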